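/- A polynomial p with real coefficients satisfies: there exists a polynomial q with real coefficients such that ∑_{k=0}^{n−1} p(k)/k! = −q(n)/n! for all integers n ≥ 0, if and only if p lies in the real linear span of the polynomials p_d(X) = X^{d+1} − (X+1)^d for d ≥ 0. -/
import Mathlib

open Polynomial in
private lemma aux_X_mul_mem (r : Polynomial ℝ) :
    X * r ∈ Submodule.span ℝ (Set.range fun d : ℕ => (X : Polynomial ℝ) ^ (d + 1)) := by
  induction r using Polynomial.induction_on' with
  | add f g hf hg => rw [mul_add]; exact Submodule.add_mem _ hf hg
  | monomial n a =>
    have h : (X : Polynomial ℝ) * monomial n a = a • X ^ (n + 1) := by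
      rw [← Polynomial.C_mul_X_pow_eq_monomial, Polynomial.smul_eq_C_mul]
      ring
    rw [h]
    exact Submodule.smul_mem _ _ (Submodule.subset_span ⟨n, rfl⟩)

open Polynomial in
private lemma aux_step (q : Polynomial ℝ)
    (hq : q ∈ Submodule.span ℝ (Set.range fun d : ℕ => (X : Polynomial ℝ) ^ (d + 1))) :
    (X + 1) * q - q.comp (X + 1) ∈
      Submodule.map (LinearMap.mulLeft ℝ ((X : Polynomial ℝ) + 1)) (Submodule.span ℝ
        (Set.range fun d : ℕ => (X : Polynomial ℝ) ^ (d + 1) - (X + 1) ^ d)) := by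
  induction hq using Submodule.span_induction with
  | mem x hx =>
    obtain ⟨d, rfl⟩ := hx
    refine ⟨(X : Polynomial ℝ) ^ (d + 1) - (X + 1) ^ d, Submodule.subset_span ⟨d, rfl⟩, ?_⟩
    simp only [LinearMap.mulLeft_apply]
    rw [Polynomial.X_pow_comp]
    ring
  | zero => simpa using Submodule.zero_mem _
  | add x y hx hy ihx ihy =>
    have h : (X + 1) * (x + y) - (x + y).comp (X + 1) =
        ((X + 1) * x - x.comp (X + 1)) + ((X + 1) * y - y.comp (X + 1)) := by
      rw [Polynomial.add_comp]; ring
    rw [h]; exact Submodule.add_mem _ ihx ihy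
  | smul a x hx ih =>
    have h : (X + 1) * (a • x) - (a • x).comp (X + 1) =
        a • ((X + 1) * x - x.comp (X + 1)) := by
      rw [Polynomial.smul_comp, smul_sub, mul_smul_comm]
    rw [h]; exact Submodule.smul_mem _ _ ih

open Polynomial in
theorem stmt_3 (p : Polynomial ℝ) :
    (∃ q : Polynomial ℝ, ∀ n : ℕ,
        ∑ k ∈ Finset.range n, (p.eval (k : ℝ) / (Nat.factorial k : ℝ)) =
          -(q.eval (n : ℝ) / (Nat.factorial n : ℝ))) ↔
      p ∈ Submodule.span ℝ
        (Set.range fun d : ℕ => (X : Polynomial ℝ) ^ (d + 1) - (X + 1) ^ d) := by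
  have hX1 : (X : Polynomial ℝ) + 1 ≠ 0 := by
    intro h
    have := congrArg (Polynomial.eval (0 : ℝ)) h
    simp at this
  constructor
  · rintro ⟨q, hq⟩
    -- derive the polynomial identity
    have key : (X + 1) * p = (X + 1) * q - q.comp (X + 1) := by
      have hev : ∀ n : ℕ,
          ((X + 1) * p - ((X + 1) * q - q.comp (X + 1))).eval (n : ℝ) = 0 := by
        intro n
        have hn := hq n
        have hn1 := hq (n + 1)
        rw [Finset.sum_range_succ, hn] at hn1
        have hfac : (Nat.factorial n : ℝ) ≠ 0 := by
          exact_mod_cast Nat.factorial_ne_zero n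
        have hfac2 : (Nat.factorial (n + 1) : ℝ) = ((n : ℝ) + 1) * (Nat.factorial n : ℝ) := by
          push_cast [Nat.factorial_succ]; ring
        have hn1' : q.eval ((n : ℝ) + 1) = ((n : ℝ) + 1) * q.eval (n : ℝ) - ((n : ℝ) + 1) * p.eval (n : ℝ) := by
          push_cast at hn1
          rw [hfac2] at hn1
          have hne : (n : ℝ) + 1 ≠ 0 := by positivity
          have h3 : -(q.eval ((n:ℝ)+1)) =
              (-(q.eval (n:ℝ) / (Nat.factorial n : ℝ)) + p.eval (n:ℝ) / (Nat.factorial n : ℝ)) *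
                (((n:ℝ)+1) * (Nat.factorial n : ℝ)) := by
            rw [hn1]; field_simp
          have h4 : (-(q.eval (n:ℝ) / (Nat.factorial n : ℝ)) + p.eval (n:ℝ) / (Nat.factorial n : ℝ)) *
                (((n:ℝ)+1) * (Nat.factorial n : ℝ)) = ((n:ℝ)+1) * (p.eval (n:ℝ) - q.eval (n:ℝ)) := by
            field_simp; ring
          rw [h4] at h3; linarith
        simp [Polynomial.eval_comp, hn1']
        try ring
      have hsub : (X + 1) * p - ((X + 1) * q - q.comp (X + 1)) = 0 := by
        apply Polynomial.eq_zero_of_infinite_isRoot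
        apply Set.Infinite.mono (s := Set.range (Nat.cast : ℕ → ℝ))
        · rintro x ⟨n, rfl⟩; exact hev n
        · exact Set.infinite_range_of_injective Nat.cast_injective
      exact sub_eq_zero.mp hsub
    -- q vanishes at 0
    have h0 : q.eval 0 = 0 := by
      have := congrArg (Polynomial.eval (-1 : ℝ)) key
      simp [Polynomial.eval_comp] at this
      linarith
    obtain ⟨r, hr⟩ : (X : Polynomial ℝ) ∣ q := by
      rw [Polynomial.X_dvd_iff, Polynomial.coeff_zero_eq_eval_zero, h0]
    have hqspan : q ∈ Submodule.span ℝ (Set.range fun d : ℕ => (X : Polynomial ℝ) ^ (d + 1)) := by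
      rw [hr]; exact aux_X_mul_mem r
    have hmem := aux_step q hqspan
    rw [← key] at hmem
    obtain ⟨p', hp', he⟩ := hmem
    simp only [LinearMap.mulLeft_apply] at he
    have : p' = p := mul_left_cancel₀ hX1 he
    rwa [this] at hp'
  · intro hp
    have hkey : ∃ q : Polynomial ℝ, (X + 1) * p = (X + 1) * q - q.comp (X + 1) := by
      induction hp using Submodule.span_induction with
      | mem x hx =>
        obtain ⟨d, rfl⟩ := hx
        exact ⟨(X : Polynomial ℝ) ^ (d + 1), by rw [Polynomial.X_pow_comp]; ring⟩
      | zero => exact ⟨0, by simp⟩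
      | add x y hx hy ihx ihy =>
        obtain ⟨q1, h1⟩ := ihx
        obtain ⟨q2, h2⟩ := ihy
        exact ⟨q1 + q2, by rw [Polynomial.add_comp]; linear_combination h1 + h2⟩
      | smul a x hx ih =>
        obtain ⟨q0, h⟩ := ih
        refine ⟨a • q0, ?_⟩
        rw [Polynomial.smul_comp, mul_smul_comm, mul_smul_comm, ← smul_sub, h]
    obtain ⟨q, key⟩ := hkey
    have h0 : q.eval 0 = 0 := by
      have := congrArg (Polynomial.eval (-1 : ℝ)) key
      simp [Polynomial.eval_comp] at this
      linarith
    refine ⟨q, ?_⟩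
    intro n
    induction n with
    | zero => simp [h0]
    | succ n ih =>
      have he := congrArg (Polynomial.eval ((n : ℝ))) key
      simp [Polynomial.eval_comp] at he
      have hrec : q.eval ((n : ℝ) + 1) = ((n : ℝ) + 1) * (q.eval (n : ℝ) - p.eval (n : ℝ)) := by
        nlinarith [he]
      have hfac : (Nat.factorial n : ℝ) ≠ 0 := by
        exact_mod_cast Nat.factorial_ne_zero n
      have hne : (n : ℝ) + 1 ≠ 0 := by positivity
      rw [Finset.sum_range_succ, ih]
      push_cast [Nat.factorial_succ]
      rw [hrec, mul_div_mul_left _ _ hne]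
      field_simp
      ring
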